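/- Fix integers Γ ≥ 2 and Υ ≥ 1, real numbers a₀, a₁, …, a_Υ, permutations π₁, …, π_Υ of {1, …, Γ}, a real number t ≠ 0, and a real number k > 2. Then there exist a dimension n and matrices H₀, H₁, …, H_Γ ∈ Mₙ(ℂ) such that, setting H_γ(s) := e^{H₀ s} H_γ e^{−H₀ s}, the time-dependent product formula S(t) = ∏_{v=1}^{Υ} ∏_{γ=1}^{Γ} Texp( ∫_{a_{v−1} t}^{a_v t} α H_{π_v(γ)}(s) ds ) (factors for larger v, and within fixed v larger γ, applied on the left) does NOT satisfy ‖S(t) − Texp( ∫₀ᵗ α Σ_{γ=1}^Γ H_γ(s) ds )‖ = O(α^k) as α → 0. -/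

import Mathlib

open scoped Matrix.Norms.L2Operator
open Asymptotics

noncomputable section

open Classical in
/-- The time-ordered exponential `Texp(∫_a^b M(s) ds)`: the value at `b` of the (for
continuous `M`, unique) solution `W` of `W'(τ) = M(τ) W(τ)` with `W(a) = 1`. -/
def Texp {n : ℕ} (M : ℝ → Matrix (Fin n) (Fin n) ℂ) (a b : ℝ) :
    Matrix (Fin n) (Fin n) ℂ :=
  if h : ∃ W : ℝ → Matrix (Fin n) (Fin n) ℂ,
      W a = 1 ∧ ∀ τ : ℝ, HasDerivAt W (M τ * W τ) τ
  then h.choose b else 0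

/-- The interaction-picture family `H_γ(s) = e^{H₀ s} H_γ e^{-H₀ s}`. -/
def conjPicture {n : ℕ} (H₀ A : Matrix (Fin n) (Fin n) ℂ) (s : ℝ) :
    Matrix (Fin n) (Fin n) ℂ :=
  NormedSpace.exp (s • H₀) * A * NormedSpace.exp ((-s) • H₀)


namespace NoGo

abbrev M3 := Matrix (Fin 3) (Fin 3) ℂ

def P00 : M3 := Matrix.single 0 0 1
lemma P00_mul_P00 : P00 * P00 = P00 := by
  simp [P00, Matrix.single_mul_single_same]

def E01 : M3 := Matrix.single 0 1 1
def E12 : M3 := Matrix.single 1 2 1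
def E02 : M3 := Matrix.single 0 2 1
lemma E01_mul_E12 : E01 * E12 = E02 := by
  simp [E01, E12, E02, Matrix.single_mul_single_same]
lemma E01_mul_E01 : E01 * E01 = 0 := by
  simp [E01, Matrix.single_mul_single_of_ne]
lemma E12_mul_E12 : E12 * E12 = 0 := by
  simp [E12, Matrix.single_mul_single_of_ne]
lemma E12_mul_E01 : E12 * E01 = 0 := by
  simp [E12, E01, Matrix.single_mul_single_of_ne]
lemma E02_mul_E01 : E02 * E01 = 0 := by
  simp [E02, E01, Matrix.single_mul_single_of_ne]
lemma E02_mul_E12 : E02 * E12 = 0 := by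
  simp [E02, E12, Matrix.single_mul_single_of_ne]
lemma E01_mul_E02 : E01 * E02 = 0 := by
  simp [E01, E02, Matrix.single_mul_single_of_ne]
lemma E12_mul_E02 : E12 * E02 = 0 := by
  simp [E12, E02, Matrix.single_mul_single_of_ne]
lemma E02_mul_E02 : E02 * E02 = 0 := by
  simp [E02, Matrix.single_mul_single_of_ne]

def U (q : ℂ × ℂ × ℂ) : M3 := 1 + q.1 • E01 + q.2.1 • E12 + q.2.2 • E02

lemma U_mul (q r : ℂ × ℂ × ℂ) :
    U q * U r = U (q.1 + r.1, q.2.1 + r.2.1, q.2.2 + r.2.2 + q.1 * r.2.1) := by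
  obtain ⟨x, y, z⟩ := q
  obtain ⟨x', y', z'⟩ := r
  simp only [U, mul_add, add_mul, one_mul, mul_one, Matrix.smul_mul, Matrix.mul_smul,
    E01_mul_E01, E01_mul_E12, E01_mul_E02, E12_mul_E01, E12_mul_E12, E12_mul_E02,
    E02_mul_E01, E02_mul_E12, E02_mul_E02, smul_zero, add_zero, smul_smul]
  module

lemma U_one : U (0, 0, 0) = 1 := by simp [U]
lemma U_zero : U 0 = 1 := by simp [U]

def StrictUpper (A : M3) : Prop :=
  A 0 0 = 0 ∧ A 1 0 = 0 ∧ A 1 1 = 0 ∧ A 2 0 = 0 ∧ A 2 1 = 0 ∧ A 2 2 = 0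

lemma strictUpper_lincomb (r : ℝ) (x y z : ℂ) :
    StrictUpper (r • (x • E01 + y • E12 + z • E02)) := by
  refine ⟨?_, ?_, ?_, ?_, ?_, ?_⟩ <;>
    simp [E01, E12, E02, Matrix.smul_apply, Matrix.add_apply,
      Matrix.single_apply_of_ne]

lemma real_smul_M3 (r : ℝ) (A : M3) : r • A = (r : ℂ) • A := by
  rw [← smul_one_smul ℂ r A, Complex.real_smul, mul_one]

-- from p3 (uniqueness etc.)
def entryLM (i j : Fin 3) : M3 →ₗ[ℂ] ℂ where
  toFun A := A i j
  map_add' _ _ := rfl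
  map_smul' _ _ := rfl
def entryCLM (i j : Fin 3) : M3 →L[ℂ] ℂ :=
  LinearMap.toContinuousLinearMap (entryLM i j)
lemma hasDerivAt_entry {W : ℝ → M3} {V : M3} {τ : ℝ}
    (h : HasDerivAt W V τ) (i j : Fin 3) :
    HasDerivAt (fun τ => W τ i j) (V i j) τ := by
  have h2 := (((entryCLM i j).restrictScalars ℝ).hasFDerivAt (x := W τ)).comp_hasDerivAt τ h
  have e : ∀ A : M3, entryCLM i j A = A i j := fun A => rfl
  exact h2
lemma const_of_deriv0 {f : ℝ → ℂ} (h : ∀ τ, HasDerivAt f 0 τ) (x y : ℝ) : f x = f y :=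
  is_const_of_deriv_eq_zero (fun τ => (h τ).differentiableAt)
    (fun τ => (h τ).deriv) x y
lemma solution_unique {M W V : ℝ → M3} {a : ℝ}
    (hM : ∀ τ, StrictUpper (M τ))
    (hW1 : W a = 1) (hW : ∀ τ, HasDerivAt W (M τ * W τ) τ)
    (hV1 : V a = 1) (hV : ∀ τ, HasDerivAt V (M τ * V τ) τ) :
    V = W := by
  set D : ℝ → M3 := fun τ => V τ - W τ with hD
  have hDa : ∀ i j, D a i j = 0 := by intro i j; simp [hD, hV1, hW1]
  have hDd : ∀ τ, HasDerivAt D (M τ * D τ) τ := by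
    intro τ
    have := (hV τ).sub (hW τ)
    rw [hD]; simp only [mul_sub]; exact this
  have hDd' : ∀ τ i j, HasDerivAt (fun τ => D τ i j) ((M τ * D τ) i j) τ := by
    intro τ i j; exact hasDerivAt_entry (hDd τ) i j
  have row2 : ∀ j τ, D τ 2 j = 0 := by
    intro j τ
    have h0 : ∀ σ, HasDerivAt (fun τ => D τ 2 j) 0 σ := by
      intro σ
      have h := hDd' σ 2 j
      have : (M σ * D σ) 2 j = 0 := by
        rw [Matrix.mul_apply, Fin.sum_univ_three]
        obtain ⟨h1, h2, h3, h4, h5, h6⟩ := hM σ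
        simp [h4, h5, h6]
      rwa [this] at h
    rw [const_of_deriv0 h0 τ a, hDa]
  have row1 : ∀ j τ, D τ 1 j = 0 := by
    intro j τ
    have h0 : ∀ σ, HasDerivAt (fun τ => D τ 1 j) 0 σ := by
      intro σ
      have h := hDd' σ 1 j
      have : (M σ * D σ) 1 j = 0 := by
        rw [Matrix.mul_apply, Fin.sum_univ_three]
        obtain ⟨h1, h2, h3, h4, h5, h6⟩ := hM σ
        simp [h2, h3, row2 j σ]
      rwa [this] at h
    rw [const_of_deriv0 h0 τ a, hDa]
  have row0 : ∀ j τ, D τ 0 j = 0 := by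
    intro j τ
    have h0 : ∀ σ, HasDerivAt (fun τ => D τ 0 j) 0 σ := by
      intro σ
      have h := hDd' σ 0 j
      have : (M σ * D σ) 0 j = 0 := by
        rw [Matrix.mul_apply, Fin.sum_univ_three]
        obtain ⟨h1, h2, h3, h4, h5, h6⟩ := hM σ
        simp [h1, row1 j σ, row2 j σ]
      rwa [this] at h
    rw [const_of_deriv0 h0 τ a, hDa]
  funext τ
  have hz : D τ = 0 := by
    ext i j
    fin_cases i
    · simpa using row0 j τ
    · simpa using row1 j τ
    · simpa using row2 j τ
  have h2 := sub_eq_zero.mp (hD ▸ hz)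
  exact h2

lemma Texp_eq {M W : ℝ → M3} {a b : ℝ}
    (hM : ∀ τ, StrictUpper (M τ))
    (hW1 : W a = 1) (hW : ∀ τ, HasDerivAt W (M τ * W τ) τ) :
    Texp M a b = W b := by
  rw [Texp, dif_pos ⟨W, hW1, hW⟩]
  have h : ∃ W : ℝ → M3, W a = 1 ∧ ∀ τ : ℝ, HasDerivAt W (M τ * W τ) τ := ⟨W, hW1, hW⟩
  obtain ⟨hV1, hV⟩ := h.choose_spec
  exact congrFun (solution_unique hM hW1 hW hV1 hV) b

-- scalar exp derivative
lemma hasDerivAt_cexp_mul (p τ : ℝ) :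
    HasDerivAt (fun τ : ℝ => Complex.exp ((p:ℂ)*(τ:ℂ)))
      ((p:ℂ) * Complex.exp ((p:ℂ)*(τ:ℂ))) τ := by
  have h1 : HasDerivAt (fun τ : ℝ => ((τ:ℂ))) 1 τ := by
    simpa using (hasDerivAt_id τ).ofReal_comp
  simpa [mul_comm] using (h1.const_mul (p:ℂ)).cexp

def xA (α p a b : ℝ) : ℂ :=
  (α:ℂ) * ((Complex.exp ((p:ℂ)*(b:ℂ)) - Complex.exp ((p:ℂ)*(a:ℂ))) / (p:ℂ))

/-- Texp of an `E01`-type factor. -/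
lemma TexpA (α p a b : ℝ) (hp : p ≠ 0) :
    Texp (fun s => α • (Complex.exp ((p:ℂ)*(s:ℂ)) • E01)) a b = U (xA α p a b, 0, 0) := by
  have hpc : (p:ℂ) ≠ 0 := Complex.ofReal_ne_zero.mpr hp
  refine Texp_eq (W := fun τ => U (xA α p a τ, 0, 0)) ?_ ?_ ?_
  · intro τ
    have : (α • (Complex.exp ((p:ℂ)*(τ:ℂ)) • E01))
        = α • (Complex.exp ((p:ℂ)*(τ:ℂ)) • E01 + (0:ℂ) • E12 + (0:ℂ) • E02) := by
      simp
    rw [this]; exact strictUpper_lincomb _ _ _ _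
  · simp [xA, U_one, U_zero]
  · intro τ
    have hx : HasDerivAt (fun τ : ℝ => xA α p a τ)
        ((α:ℂ) * Complex.exp ((p:ℂ)*(τ:ℂ))) τ := by
      have h := (((hasDerivAt_cexp_mul p τ).sub_const
        (Complex.exp ((p:ℂ)*(a:ℂ)))).div_const (p:ℂ)).const_mul (α:ℂ)
      have e : (α:ℂ) * ((p:ℂ) * Complex.exp ((p:ℂ)*(τ:ℂ)) / (p:ℂ))
          = (α:ℂ) * Complex.exp ((p:ℂ)*(τ:ℂ)) := by
        field_simp
      rw [e] at h
      exact h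
    have hW : HasDerivAt (fun τ => U (xA α p a τ, 0, 0))
        (((α:ℂ) * Complex.exp ((p:ℂ)*(τ:ℂ))) • E01) τ := by
      have base : HasDerivAt (fun τ => (1:M3) + (xA α p a τ) • E01)
          (0 + ((α:ℂ) * Complex.exp ((p:ℂ)*(τ:ℂ))) • E01) τ :=
        (hasDerivAt_const τ (1:M3)).add (hx.smul_const E01)
      have : (fun τ => U (xA α p a τ, 0, 0)) = fun τ => (1:M3) + (xA α p a τ) • E01 := by
        funext σ; simp [U]
      rw [this]
      simpa using base
    have hMW : (α • (Complex.exp ((p:ℂ)*(τ:ℂ)) • E01)) * U (xA α p a τ, 0, 0)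
        = ((α:ℂ) * Complex.exp ((p:ℂ)*(τ:ℂ))) • E01 := by
      rw [real_smul_M3]
      simp only [U, smul_smul, mul_add, Matrix.smul_mul, Matrix.mul_smul, mul_one,
        E01_mul_E01, E01_mul_E12, E01_mul_E02, smul_zero, add_zero]
      module
    rw [hMW]
    exact hW

/-- Texp of an `E12`-type factor. -/
lemma TexpB (α a b : ℝ) :
    Texp (fun _ => α • (E12 : M3)) a b = U (0, (α:ℂ) * ((b:ℂ) - (a:ℂ)), 0) := by
  refine Texp_eq (W := fun τ => U (0, (α:ℂ) * ((τ:ℂ) - (a:ℂ)), 0)) ?_ ?_ ?_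
  · intro τ
    have : (α • (E12 : M3)) = α • ((0:ℂ) • E01 + (1:ℂ) • E12 + (0:ℂ) • E02) := by simp
    rw [this]; exact strictUpper_lincomb _ _ _ _
  · simp [U_one, U_zero]
  · intro τ
    have h1 : HasDerivAt (fun τ : ℝ => ((τ:ℂ))) 1 τ := by
      simpa using (hasDerivAt_id τ).ofReal_comp
    have hy : HasDerivAt (fun τ : ℝ => (α:ℂ) * ((τ:ℂ) - (a:ℂ))) (α:ℂ) τ := by
      simpa using (h1.sub_const ((a:ℂ))).const_mul (α:ℂ)
    have hW : HasDerivAt (fun τ : ℝ => U (0, (α:ℂ) * ((τ:ℂ) - (a:ℂ)), 0)) ((α:ℂ) • E12) τ := by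
      have base : HasDerivAt (fun τ : ℝ => (1:M3) + ((α:ℂ) * ((τ:ℂ) - (a:ℂ))) • E12)
          (0 + (α:ℂ) • E12) τ := (hasDerivAt_const τ (1:M3)).add (hy.smul_const E12)
      have e2 : (fun τ : ℝ => U (0, (α:ℂ) * ((τ:ℂ) - (a:ℂ)), 0))
          = fun τ : ℝ => (1:M3) + ((α:ℂ) * ((τ:ℂ) - (a:ℂ))) • E12 := by
        funext σ; simp [U]
      rw [e2]; simpa using base
    have hMW : (α • (E12 : M3)) * U (0, (α:ℂ) * (((τ:ℝ):ℂ) - (a:ℂ)), 0) = (α:ℂ) • E12 := by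
      rw [real_smul_M3]
      simp only [U, mul_add, Matrix.smul_mul, Matrix.mul_smul, mul_one,
        E12_mul_E01, E12_mul_E12, E12_mul_E02, smul_zero, add_zero]
    rw [hMW]
    exact hW

/-- Texp of the zero generator. -/
lemma TexpZero (a b : ℝ) :
    Texp (fun _ : ℝ => (0 : M3)) a b = 1 := by
  refine Texp_eq (W := fun _ => (1:M3)) ?_ ?_ ?_
  · intro τ
    have : (0 : M3) = (0:ℝ) • ((0:ℂ) • E01 + (0:ℂ) • E12 + (0:ℂ) • E02) := by simp
    rw [this]; exact strictUpper_lincomb _ _ _ _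
  · rfl
  · intro τ
    simpa using hasDerivAt_const τ (1:M3)

def zT (α p t : ℝ) : ℂ :=
  (α:ℂ)^2 * (Complex.exp ((p:ℂ)*(t:ℂ)) * ((t:ℂ)/(p:ℂ) - 1/(p:ℂ)^2) + 1/(p:ℂ)^2)

/-- Texp of the full generator from 0 to t. -/
lemma TexpFull (α p t : ℝ) (hp : p ≠ 0) :
    Texp (fun s => α • (Complex.exp ((p:ℂ)*(s:ℂ)) • E01 + E12)) 0 t
      = U (xA α p 0 t, (α:ℂ) * (t:ℂ), zT α p t) := by
  have hpc : (p:ℂ) ≠ 0 := Complex.ofReal_ne_zero.mpr hp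
  refine Texp_eq (W := fun τ => U (xA α p 0 τ, (α:ℂ) * (τ:ℂ), zT α p τ)) ?_ ?_ ?_
  · intro τ
    have : (α • (Complex.exp ((p:ℂ)*(τ:ℂ)) • E01 + E12))
        = α • (Complex.exp ((p:ℂ)*(τ:ℂ)) • E01 + (1:ℂ) • E12 + (0:ℂ) • E02) := by
      simp
    rw [this]; exact strictUpper_lincomb _ _ _ _
  · show U (xA α p 0 0, (α:ℂ) * (((0:ℝ)):ℂ), zT α p 0) = 1
    have hx : xA α p 0 0 = 0 := by simp [xA]
    have hz : zT α p 0 = 0 := by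
      simp only [zT, Complex.ofReal_zero, mul_zero, Complex.exp_zero, zero_div, one_mul]
      ring
    rw [hx, hz]
    simp [U]
  · intro τ
    have h1 : HasDerivAt (fun τ : ℝ => ((τ:ℂ))) 1 τ := by
      simpa using (hasDerivAt_id τ).ofReal_comp
    have hx : HasDerivAt (fun τ : ℝ => xA α p 0 τ)
        ((α:ℂ) * Complex.exp ((p:ℂ)*(τ:ℂ))) τ := by
      have h := (((hasDerivAt_cexp_mul p τ).sub_const
        (Complex.exp ((p:ℂ)*((0:ℝ):ℂ)))).div_const (p:ℂ)).const_mul (α:ℂ)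
      have e : (α:ℂ) * ((p:ℂ) * Complex.exp ((p:ℂ)*(τ:ℂ)) / (p:ℂ))
          = (α:ℂ) * Complex.exp ((p:ℂ)*(τ:ℂ)) := by field_simp
      rw [e] at h
      exact h
    have hy : HasDerivAt (fun τ : ℝ => (α:ℂ) * (τ:ℂ)) (α:ℂ) τ := by
      simpa using h1.const_mul (α:ℂ)
    have hz : HasDerivAt (fun τ : ℝ => zT α p τ)
        ((α:ℂ)^2 * ((τ:ℂ) * Complex.exp ((p:ℂ)*(τ:ℂ)))) τ := by
      have hl : HasDerivAt (fun τ : ℝ => ((τ:ℂ)/(p:ℂ) - 1/(p:ℂ)^2)) ((1:ℂ)/(p:ℂ)) τ :=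
        (h1.div_const (p:ℂ)).sub_const (1/(p:ℂ)^2)
      have hm := ((hasDerivAt_cexp_mul p τ).mul hl).add_const (1/(p:ℂ)^2)
      have h := hm.const_mul ((α:ℂ)^2)
      have e : (α:ℂ)^2 * ((p:ℂ) * Complex.exp ((p:ℂ)*(τ:ℂ)) * ((τ:ℂ)/(p:ℂ) - 1/(p:ℂ)^2)
          + Complex.exp ((p:ℂ)*(τ:ℂ)) * (1/(p:ℂ)))
          = (α:ℂ)^2 * ((τ:ℂ) * Complex.exp ((p:ℂ)*(τ:ℂ))) := by
        field_simp
        ring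
      rw [e] at h
      exact h
    have hW : HasDerivAt (fun τ => U (xA α p 0 τ, (α:ℂ) * (τ:ℂ), zT α p τ))
        (((α:ℂ) * Complex.exp ((p:ℂ)*(τ:ℂ))) • E01 + (α:ℂ) • E12
          + ((α:ℂ)^2 * ((τ:ℂ) * Complex.exp ((p:ℂ)*(τ:ℂ)))) • E02) τ := by
      have : (fun τ => U (xA α p 0 τ, (α:ℂ) * (τ:ℂ), zT α p τ))
          = fun τ => ((1:M3) + (xA α p 0 τ) • E01) + (((α:ℂ) * (τ:ℂ)) • E12
              + (zT α p τ) • E02) := by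
        funext σ; simp only [U]; abel
      rw [this]
      have base := (((hasDerivAt_const τ (1:M3)).add (hx.smul_const E01))).add
        ((hy.smul_const E12).add (hz.smul_const E02))
      exact base.congr_deriv (by abel)
    have hMW : (α • (Complex.exp ((p:ℂ)*(τ:ℂ)) • E01 + E12))
          * U (xA α p 0 τ, (α:ℂ) * (τ:ℂ), zT α p τ)
        = ((α:ℂ) * Complex.exp ((p:ℂ)*(τ:ℂ))) • E01 + (α:ℂ) • E12
          + ((α:ℂ)^2 * ((τ:ℂ) * Complex.exp ((p:ℂ)*(τ:ℂ)))) • E02 := by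
      rw [real_smul_M3]
      simp only [U, mul_add, add_mul, Matrix.smul_mul, Matrix.mul_smul, mul_one, one_mul,
        E01_mul_E01, E01_mul_E12, E01_mul_E02, E12_mul_E01, E12_mul_E12, E12_mul_E02,
        smul_zero, add_zero, smul_smul, smul_add]
      module
    rw [hMW]
    exact hW


lemma P00_mul_E01 : P00 * E01 = E01 := by
  simp [P00, E01, Matrix.single_mul_single_same]
lemma E01_mul_P00 : E01 * P00 = 0 := by
  simp [E01, P00, Matrix.single_mul_single_of_ne]
lemma P00_mul_E12 : P00 * E12 = 0 := by
  simp [P00, E12, Matrix.single_mul_single_of_ne]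
lemma E12_mul_P00 : E12 * P00 = 0 := by
  simp [E12, P00, Matrix.single_mul_single_of_ne]

lemma pow_smul_P00 (c : ℂ) (n : ℕ) : (c • P00)^n = if n = 0 then 1 else c^n • P00 := by
  induction n with
  | zero => simp
  | succ m ih =>
    rw [pow_succ, ih]
    rcases Nat.eq_zero_or_pos m with hm | hm
    · simp [hm, pow_one]
    · rw [if_neg hm.ne', if_neg (Nat.succ_ne_zero m)]
      rw [Matrix.smul_mul, Matrix.mul_smul, P00_mul_P00, smul_smul, pow_succ]

lemma exp_smul_P00 (c : ℂ) :
    NormedSpace.exp (c • P00) = 1 + (Complex.exp c - 1) • P00 := by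
  rw [NormedSpace.exp_eq_tsum (𝕂 := ℂ)]
  have h1 : Summable fun n : ℕ => ((n.factorial : ℂ)⁻¹ * c ^ n) • P00 := by
    have := NormedSpace.expSeries_summable' (𝕂 := ℂ) c
    simpa [smul_eq_mul] using this.smul_const P00
  have h2 : Summable fun n : ℕ => (if n = 0 then (1 - P00 : M3) else 0) := by
    apply summable_of_ne_finset_zero (s := {0})
    intro n hn
    simp only [Finset.mem_singleton] at hn
    simp [hn]
  have key : ∀ n : ℕ, ((n.factorial : ℂ)⁻¹ • (c • P00) ^ n)
      = ((n.factorial : ℂ)⁻¹ * c ^ n) • P00 + (if n = 0 then (1 - P00 : M3) else 0) := by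
    intro n
    rw [pow_smul_P00]
    rcases Nat.eq_zero_or_pos n with hn | hn
    · subst hn; simp
    · rw [if_neg hn.ne', if_neg hn.ne', add_zero, smul_smul]
  calc (∑' n : ℕ, (n.factorial : ℂ)⁻¹ • (c • P00) ^ n)
      = ∑' n : ℕ, (((n.factorial : ℂ)⁻¹ * c ^ n) • P00
          + (if n = 0 then (1 - P00 : M3) else 0)) := by
        exact tsum_congr key
    _ = (∑' n : ℕ, ((n.factorial : ℂ)⁻¹ * c ^ n) • P00)
          + ∑' n : ℕ, (if n = 0 then (1 - P00 : M3) else 0) := Summable.tsum_add h1 h2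
    _ = (∑' n : ℕ, ((n.factorial : ℂ)⁻¹ * c ^ n)) • P00 + (1 - P00) := by
        have hs : Summable fun n : ℕ => ((n.factorial : ℂ)⁻¹ * c ^ n) := by
          have := NormedSpace.expSeries_summable' (𝕂 := ℂ) c
          simpa [smul_eq_mul] using this
        have e2 : (∑' n : ℕ, (if n = 0 then (1 - P00 : M3) else 0)) = 1 - P00 := by
          rw [tsum_eq_single 0]
          · simp
          · intro b hb; simp [hb]
        rw [e2, Summable.tsum_smul_const hs]
    _ = 1 + (Complex.exp c - 1) • P00 := by
        have : (∑' n : ℕ, ((n.factorial : ℂ)⁻¹ * c ^ n)) = Complex.exp c := by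
          rw [Complex.exp_eq_exp_ℂ, NormedSpace.exp_eq_tsum (𝕂 := ℂ)]
          simp [smul_eq_mul]
        rw [this]; module

lemma entry_le_norm (A : M3) (i j : Fin 3) : ‖A i j‖ ≤ ‖A‖ := by
  have h := Matrix.l2_opNorm_mulVec A (EuclideanSpace.single j (1:ℂ))
  rw [EuclideanSpace.norm_single] at h
  simp only [norm_one, mul_one] at h
  refine le_trans ?_ h
  set v : EuclideanSpace ℂ (Fin 3) :=
    (EuclideanSpace.equiv (Fin 3) ℂ).symm (A.mulVec (EuclideanSpace.single j (1:ℂ))) with hv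
  have hvi : v i = A i j := by
    rw [hv]
    show (A.mulVec (EuclideanSpace.single j (1:ℂ))) i = A i j
    have : (EuclideanSpace.single j (1:ℂ) : Fin 3 → ℂ) = fun k => if k = j then 1 else 0 := by
      funext k
      by_cases hk : k = j
      · subst hk; simp [EuclideanSpace.single_apply]
      · simp [EuclideanSpace.single_apply, hk]
    rw [this]
    simp only [Matrix.mulVec, dotProduct, mul_ite, mul_one, mul_zero, Fin.sum_univ_three]
    fin_cases j <;> simp
  calc ‖A i j‖ = ‖v i‖ := by rw [hvi]
    _ ≤ ‖v‖ := by
        rw [EuclideanSpace.norm_eq]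
        have h1 : ‖v i‖ = Real.sqrt (‖v i‖^2) := by
          rw [Real.sqrt_sq (norm_nonneg _)]
        rw [h1]
        apply Real.sqrt_le_sqrt
        have := Finset.single_le_sum (f := fun k => ‖v k‖^2)
          (fun k _ => sq_nonneg _) (Finset.mem_univ i)
        simpa using this
lemma prod_revOfFn : ∀ (n : ℕ) (g : Fin n → ℂ × ℂ × ℂ),
    (List.ofFn (fun i => U (g i))).reverse.prod
      = U (∑ i, (g i).1, ∑ i, (g i).2.1,
          (∑ i, (g i).2.2) + ∑ i, (∑ j ∈ Finset.Ioi i, (g j).1) * (g i).2.1) := by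
  intro n
  induction n with
  | zero =>
    intro g
    simp only [List.ofFn_zero, List.reverse_nil, List.prod_nil, Finset.univ_eq_empty,
      Finset.sum_empty, add_zero]
    exact U_one.symm
  | succ m ih =>
    intro g
    rw [List.ofFn_succ, List.reverse_cons, List.prod_append, List.prod_cons, List.prod_nil,
      mul_one]
    rw [ih (fun i => g i.succ), U_mul]
    refine congrArg U ?_
    simp only [Prod.mk.injEq]
    refine ⟨?_, ?_, ?_⟩
    · rw [Fin.sum_univ_succ (f := fun i : Fin (m+1) => (g i).1)]; ring
    · rw [Fin.sum_univ_succ (f := fun i : Fin (m+1) => (g i).2.1)]; ring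
    · rw [Fin.sum_univ_succ (f := fun i : Fin (m+1) => (g i).2.2),
        Fin.sum_univ_succ (f := fun i : Fin (m+1) => (∑ j ∈ Finset.Ioi i, (g j).1) * (g i).2.1),
        Fin.sum_Ioi_zero]
      have h2 : ∀ i : Fin m, (∑ j ∈ Finset.Ioi i.succ, (g j).1) = ∑ j ∈ Finset.Ioi i, (g j.succ).1 :=
        fun i => Fin.sum_Ioi_succ _ i
      simp only [h2]
      ring

section ExpPoly
open Filter Real

lemma tendsto_linear_mul_exp_decay (a b c : ℝ) (hc : 0 < c) :
    Tendsto (fun p : ℝ => (a * p + b) * Real.exp (-(c * p))) atTop (nhds 0) := by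
  have hcp : Tendsto (fun p : ℝ => c * p) atTop atTop :=
    Tendsto.const_mul_atTop hc tendsto_id
  have he : Tendsto (fun p : ℝ => Real.exp (-(c * p))) atTop (nhds 0) :=
    Real.tendsto_exp_atBot.comp (tendsto_neg_atBot_iff.mpr hcp)
  have hpe : Tendsto (fun p : ℝ => p * Real.exp (-(c * p))) atTop (nhds 0) := by
    have base := Real.tendsto_pow_mul_exp_neg_atTop_nhds_zero 1
    have comp : Tendsto (fun p : ℝ => (c * p) ^ 1 * Real.exp (-(c * p))) atTop (nhds 0) :=
      base.comp hcp
    have comp2 := comp.const_mul (1/c)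
    rw [mul_zero] at comp2
    refine Tendsto.congr (fun p => ?_) comp2
    field_simp
  have : (fun p : ℝ => (a * p + b) * Real.exp (-(c * p)))
      = fun p => a * (p * Real.exp (-(c * p))) + b * Real.exp (-(c * p)) := by
    funext p; ring
  rw [this]
  simpa using (hpe.const_mul a).add (he.const_mul b)

/-- linear-coefficient exponential polynomials vanishing on `[1, ∞)` have zero coefficients -/
lemma exppoly_zero : ∀ (n : ℕ) (R : Finset ℝ), R.card = n → ∀ (Ag Bg : ℝ → ℝ),
    (∀ p : ℝ, 1 ≤ p → ∑ r ∈ R, (Ag r * p + Bg r) * Real.exp (r * p) = 0) →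
    ∀ r ∈ R, Ag r = 0 ∧ Bg r = 0 := by
  intro n
  induction n with
  | zero =>
    intro R hR Ag Bg h r hr
    rw [Finset.card_eq_zero.mp hR] at hr
    exact absurd hr (Finset.notMem_empty r)
  | succ m ih =>
    intro R hR Ag Bg h r hr
    have hne : R.Nonempty := ⟨r, hr⟩
    set rm := R.max' hne with hrm
    have hrmR : rm ∈ R := R.max'_mem hne
    -- the tail sum tends to 0
    have hF : Tendsto (fun p : ℝ =>
        ∑ s ∈ R.erase rm, (Ag s * p + Bg s) * Real.exp ((s - rm) * p)) atTop (nhds 0) := by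
      have : ∀ s ∈ R.erase rm, Tendsto (fun p : ℝ =>
          (Ag s * p + Bg s) * Real.exp ((s - rm) * p)) atTop (nhds 0) := by
        intro s hs
        have hslt : s < rm := lt_of_le_of_ne (R.le_max' s (Finset.mem_of_mem_erase hs))
          (Finset.ne_of_mem_erase hs)
        have hc : 0 < rm - s := by linarith
        have := tendsto_linear_mul_exp_decay (Ag s) (Bg s) (rm - s) hc
        have e : (fun p : ℝ => (Ag s * p + Bg s) * Real.exp (-((rm - s) * p)))
            = fun p : ℝ => (Ag s * p + Bg s) * Real.exp ((s - rm) * p) := by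
          funext p; ring_nf
        rwa [e] at this
      have := tendsto_finset_sum (R.erase rm) this
      simpa using this
    -- top coefficient from the equation
    have hkey : ∀ p : ℝ, 1 ≤ p → (Ag rm * p + Bg rm)
        = - ∑ s ∈ R.erase rm, (Ag s * p + Bg s) * Real.exp ((s - rm) * p) := by
      intro p hp
      have h0 := h p hp
      have hsplit : ∑ s ∈ R, (Ag s * p + Bg s) * Real.exp (s * p)
          = (Ag rm * p + Bg rm) * Real.exp (rm * p)
            + ∑ s ∈ R.erase rm, (Ag s * p + Bg s) * Real.exp (s * p) :=
        (Finset.add_sum_erase R _ hrmR).symm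
      rw [hsplit] at h0
      have hexp : Real.exp (rm * p) ≠ 0 := (Real.exp_pos _).ne'
      have e3 : ∀ s : ℝ, Real.exp ((s - rm) * p) = Real.exp (s * p) / Real.exp (rm * p) := by
        intro s
        rw [← Real.exp_sub]
        congr 1
        ring
      have e4 : ∑ s ∈ R.erase rm, (Ag s * p + Bg s) * Real.exp ((s - rm) * p)
          = (∑ s ∈ R.erase rm, (Ag s * p + Bg s) * Real.exp (s * p)) / Real.exp (rm * p) := by
        rw [Finset.sum_div]
        exact Finset.sum_congr rfl fun s _ => by rw [e3 s, mul_div_assoc]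
      rw [e4, ← neg_div, eq_div_iff hexp]
      linarith [h0]
    have htop : Tendsto (fun p : ℝ => Ag rm * p + Bg rm) atTop (nhds 0) := by
      have hFn : Tendsto (fun p : ℝ =>
          -∑ s ∈ R.erase rm, (Ag s * p + Bg s) * Real.exp ((s - rm) * p)) atTop (nhds 0) := by
        simpa using hF.neg
      apply Tendsto.congr' _ hFn
      filter_upwards [eventually_ge_atTop (1:ℝ)] with p hp
      exact (hkey p hp).symm
    have hAg : Ag rm = 0 := by
      have h1 : Tendsto (fun p : ℝ => (Ag rm * p + Bg rm) * p⁻¹) atTop (nhds 0) := by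
        simpa using htop.mul tendsto_inv_atTop_zero
      have h2 : Tendsto (fun p : ℝ => (Ag rm * p + Bg rm) * p⁻¹) atTop (nhds (Ag rm)) := by
        have e : ∀ᶠ p : ℝ in atTop, Ag rm + Bg rm * p⁻¹ = (Ag rm * p + Bg rm) * p⁻¹ := by
          filter_upwards [eventually_ge_atTop (1:ℝ)] with p hp
          have hp0 : p ≠ 0 := by linarith
          field_simp
        apply Tendsto.congr' e
        simpa using (tendsto_const_nhds (x := Ag rm)).add
          (tendsto_inv_atTop_zero.const_mul (Bg rm))
      exact tendsto_nhds_unique h2 h1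
    have hBg : Bg rm = 0 := by
      have := htop
      rw [hAg] at this
      simp only [zero_mul, zero_add] at this
      exact tendsto_nhds_unique tendsto_const_nhds this
    -- peel off and recurse
    have hrest : ∀ p : ℝ, 1 ≤ p →
        ∑ s ∈ R.erase rm, (Ag s * p + Bg s) * Real.exp (s * p) = 0 := by
      intro p hp
      have h0 := h p hp
      have hsplit : ∑ s ∈ R, (Ag s * p + Bg s) * Real.exp (s * p)
          = (Ag rm * p + Bg rm) * Real.exp (rm * p)
            + ∑ s ∈ R.erase rm, (Ag s * p + Bg s) * Real.exp (s * p) :=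
        (Finset.add_sum_erase R _ hrmR).symm
      rw [hsplit, hAg, hBg] at h0
      simpa using h0
    by_cases hr2 : r = rm
    · rw [hr2]; exact ⟨hAg, hBg⟩
    · exact ih (R.erase rm) (by rw [Finset.card_erase_of_mem hrmR, hR]; rfl) Ag Bg hrest r
        (Finset.mem_erase.mpr ⟨hr2, hr⟩)

end ExpPoly

section protocol
variable (Υ : ℕ) (b : ℕ → ℝ) (χ : ℕ → ℝ) (t : ℝ)

def Ureal (p : ℝ) (v : ℕ) : ℝ := (Real.exp (b (v+1) * p) - Real.exp (b v * p)) / p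

def Xreal (p : ℝ) : ℝ :=
  (∑ v : Fin Υ, χ v * (Ureal b p v * (b (v+1) - b v)))
    + ∑ v : Fin Υ, (∑ j ∈ Finset.Ioi v, Ureal b p j) * (b (v+1) - b v)

def Treal (p : ℝ) : ℝ := Real.exp (t * p) * (t/p - 1/p^2) + 1/p^2

lemma exists_good_p (ht : t ≠ 0) :
    ∃ p : ℝ, 1 ≤ p ∧ Xreal Υ b χ p ≠ Treal t p := by
  by_contra hcon
  push_neg at hcon
  set ι := (Fin Υ × Bool) ⊕ ((Fin Υ × Fin Υ) × Bool) ⊕ (Fin 3) with hι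
  set β : ι → ℝ := Sum.elim
      (fun vs => if vs.2 then b (vs.1 + 1) else b vs.1)
      (Sum.elim (fun vjs => if vjs.2 then b (vjs.1.2 + 1) else b vjs.1.2)
        ![t, t, 0]) with hβ
  set A : ι → ℝ := Sum.elim
      (fun vs => (if vs.2 then 1 else -1) * (χ vs.1 * (b (vs.1 + 1) - b vs.1)))
      (Sum.elim (fun vjs => (if vjs.2 then 1 else -1) *
          (if vjs.1.1 < vjs.1.2 then b (vjs.1.1 + 1) - b (vjs.1.1) else 0))
        ![-t, 0, 0]) with hA
  set B : ι → ℝ := Sum.elim (fun _ => 0) (Sum.elim (fun _ => 0) ![0, 1, -1]) with hB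
  have hsum : ∀ p : ℝ, 1 ≤ p → ∑ i : ι, (A i * p + B i) * Real.exp (β i * p) = 0 := by
    intro p hp
    have hp0 : p ≠ 0 := by linarith
    have key : ∑ i : ι, (A i * p + B i) * Real.exp (β i * p)
        = p^2 * (Xreal Υ b χ p - Treal t p) := by
      rw [Fintype.sum_sum_type, Fintype.sum_sum_type]
      have e1 : ∑ vs : Fin Υ × Bool, (A (Sum.inl vs) * p + B (Sum.inl vs))
            * Real.exp (β (Sum.inl vs) * p)
          = p^2 * ∑ v : Fin Υ, χ v * (Ureal b p v * (b (v+1) - b v)) := by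
        rw [Fintype.sum_prod_type]
        rw [Finset.mul_sum]
        refine Finset.sum_congr rfl fun v _ => ?_
        rw [Fintype.sum_bool]
        simp only [hA, hB, hβ, Sum.elim_inl, if_true, if_false, Ureal]
        norm_num
        field_simp
        ring
      have inner : ∀ vj : Fin Υ × Fin Υ, ∑ s : Bool,
          (A (Sum.inr (Sum.inl (vj, s))) * p + B (Sum.inr (Sum.inl (vj, s))))
            * Real.exp (β (Sum.inr (Sum.inl (vj, s))) * p)
          = p^2 * (if vj.1 < vj.2 then Ureal b p vj.2 * (b (vj.1+1) - b vj.1) else 0) := by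
        intro vj
        rw [Fintype.sum_bool]
        by_cases hlt : vj.1 < vj.2
        · simp only [hA, hB, hβ, Sum.elim_inl, Sum.elim_inr, Ureal, if_pos hlt]
          norm_num
          field_simp
          ring
        · simp only [hA, hB, hβ, Sum.elim_inl, Sum.elim_inr, Ureal, if_neg hlt]
          norm_num
      have swap : ∑ v : Fin Υ, ∑ j : Fin Υ,
            (p^2 * (if v < j then Ureal b p j * (b (v+1) - b v) else 0))
          = p^2 * ∑ v : Fin Υ, (∑ j ∈ Finset.Ioi v, Ureal b p j) * (b (v+1) - b v) := by
        rw [Finset.mul_sum]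
        refine Finset.sum_congr rfl fun v _ => ?_
        have hfil : Finset.univ.filter (fun j : Fin Υ => v < j) = Finset.Ioi v := by
          ext j; simp
        rw [Finset.sum_mul, ← hfil, Finset.sum_filter, Finset.mul_sum]
      have e2 : ∑ vjs : (Fin Υ × Fin Υ) × Bool, (A (Sum.inr (Sum.inl vjs)) * p
            + B (Sum.inr (Sum.inl vjs))) * Real.exp (β (Sum.inr (Sum.inl vjs)) * p)
          = p^2 * ∑ v : Fin Υ, (∑ j ∈ Finset.Ioi v, Ureal b p j) * (b (v+1) - b v) := by
        calc ∑ vjs : (Fin Υ × Fin Υ) × Bool, (A (Sum.inr (Sum.inl vjs)) * p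
              + B (Sum.inr (Sum.inl vjs))) * Real.exp (β (Sum.inr (Sum.inl vjs)) * p)
            = ∑ vj : Fin Υ × Fin Υ, ∑ s : Bool, (A (Sum.inr (Sum.inl (vj, s))) * p
              + B (Sum.inr (Sum.inl (vj, s)))) * Real.exp (β (Sum.inr (Sum.inl (vj, s))) * p) :=
              Fintype.sum_prod_type _
          _ = ∑ vj : Fin Υ × Fin Υ,
                p^2 * (if vj.1 < vj.2 then Ureal b p vj.2 * (b (vj.1+1) - b vj.1) else 0) :=
              Finset.sum_congr rfl fun vj _ => inner vj
          _ = ∑ v : Fin Υ, ∑ j : Fin Υ,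
                (p^2 * (if v < j then Ureal b p j * (b (v+1) - b v) else 0)) :=
              Fintype.sum_prod_type _
          _ = p^2 * ∑ v : Fin Υ, (∑ j ∈ Finset.Ioi v, Ureal b p j) * (b (v+1) - b v) := swap
      have e3 : ∑ i : Fin 3, (A (Sum.inr (Sum.inr i)) * p + B (Sum.inr (Sum.inr i)))
            * Real.exp (β (Sum.inr (Sum.inr i)) * p)
          = - (p^2 * Treal t p) := by
        rw [Fin.sum_univ_three]
        simp only [hA, hB, hβ, Sum.elim_inr, Matrix.cons_val_zero, Matrix.cons_val_one,
          Matrix.head_cons, Matrix.cons_val_two, Matrix.tail_cons, Treal, zero_mul]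
        rw [Real.exp_zero]
        field_simp
        ring
      rw [e1, e2, e3]
      simp only [Xreal]
      ring
    rw [key, hcon p hp]
    ring
  set R : Finset ℝ := Finset.image β Finset.univ with hR
  set Ag : ℝ → ℝ := fun r => ∑ i ∈ Finset.univ.filter (fun i => β i = r), A i with hAg
  set Bg : ℝ → ℝ := fun r => ∑ i ∈ Finset.univ.filter (fun i => β i = r), B i with hBg
  have hgrouped : ∀ p : ℝ, 1 ≤ p → ∑ r ∈ R, (Ag r * p + Bg r) * Real.exp (r * p) = 0 := by
    intro p hp
    have hfib := Finset.sum_fiberwise_of_maps_to (g := β)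
      (fun i (_ : i ∈ Finset.univ) => Finset.mem_image_of_mem β (Finset.mem_univ i))
      (fun i => (A i * p + B i) * Real.exp (β i * p))
    rw [← hsum p hp, ← hfib]
    refine Finset.sum_congr rfl fun r hr => ?_
    have hrw : ∑ i ∈ Finset.univ.filter (fun i => β i = r),
          (A i * p + B i) * Real.exp (β i * p)
        = ∑ i ∈ Finset.univ.filter (fun i => β i = r),
          (A i * p + B i) * Real.exp (r * p) :=
      Finset.sum_congr rfl fun i hi => by rw [(Finset.mem_filter.mp hi).2]
    rw [hrw, ← Finset.sum_mul, hAg, hBg]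
    simp only
    rw [Finset.sum_add_distrib, Finset.sum_mul]
  have hmem : t ∈ R := by
    rw [hR]
    exact Finset.mem_image.mpr ⟨Sum.inr (Sum.inr 1), Finset.mem_univ _, by simp [hβ]⟩
  obtain ⟨_, hBt⟩ := exppoly_zero R.card R rfl Ag Bg hgrouped t hmem
  have hBt1 : Bg t = 1 := by
    rw [hBg]
    simp only
    rw [Finset.sum_filter, Fintype.sum_sum_type, Fintype.sum_sum_type]
    have z1 : ∑ vs : Fin Υ × Bool,
        (if β (Sum.inl vs) = t then B (Sum.inl vs) else 0) = 0 := by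
      refine Finset.sum_eq_zero fun vs _ => ?_
      simp [hB]
    have z2 : ∑ vjs : (Fin Υ × Fin Υ) × Bool,
        (if β (Sum.inr (Sum.inl vjs)) = t then B (Sum.inr (Sum.inl vjs)) else 0) = 0 := by
      refine Finset.sum_eq_zero fun vjs _ => ?_
      simp [hB]
    rw [z1, z2, Fin.sum_univ_three]
    simp only [hB, hβ, Sum.elim_inr, Matrix.cons_val_zero, Matrix.cons_val_one,
      Matrix.head_cons, Matrix.cons_val_two, Matrix.tail_cons]
    rw [if_neg (fun h : (0:ℝ) = t => ht h.symm)]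
    norm_num
  rw [hBt] at hBt1
  exact absurd hBt1 (by norm_num)

end protocol
def gam0 (Γ : ℕ) (h : 1 < Γ) : Fin Γ := ⟨0, by omega⟩
def gam1 (Γ : ℕ) (h : 1 < Γ) : Fin Γ := ⟨1, h⟩
lemma gam_ne (Γ : ℕ) (h : 1 < Γ) : gam0 Γ h ≠ gam1 Γ h := by
  simp [gam0, gam1, Fin.ext_iff]
def Hmat (Γ : ℕ) (h : 1 < Γ) : Fin Γ → M3 :=
  fun γ => if γ = gam0 Γ h then E01 else if γ = gam1 Γ h then E12 else 0

lemma conj_E01 (p s : ℝ) :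
    conjPicture ((p:ℂ) • P00) E01 s = Complex.exp ((p:ℂ)*(s:ℂ)) • E01 := by
  have h1 : ∀ r : ℝ, r • ((p:ℂ) • P00) = ((p:ℂ)*(r:ℂ)) • P00 := by
    intro r
    rw [smul_comm, real_smul_M3, smul_smul]
  rw [conjPicture, h1, h1, exp_smul_P00, exp_smul_P00]
  have hneg : ((p:ℂ)*((-s:ℝ):ℂ)) = -((p:ℂ)*(s:ℂ)) := by push_cast; ring
  rw [hneg]
  simp only [add_mul, mul_add, one_mul, mul_one, Matrix.smul_mul, Matrix.mul_smul,
    P00_mul_E01, E01_mul_P00, smul_zero, add_zero, smul_smul]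
  module

lemma conj_E12 (p s : ℝ) : conjPicture ((p:ℂ) • P00) E12 s = E12 := by
  have h1 : ∀ r : ℝ, r • ((p:ℂ) • P00) = ((p:ℂ)*(r:ℂ)) • P00 := by
    intro r
    rw [smul_comm, real_smul_M3, smul_smul]
  rw [conjPicture, h1, h1, exp_smul_P00, exp_smul_P00]
  simp only [add_mul, mul_add, one_mul, mul_one, Matrix.smul_mul, Matrix.mul_smul,
    P00_mul_E12, E12_mul_P00, smul_zero, add_zero, smul_smul]

lemma conj_zero {n : ℕ} (H₀ : Matrix (Fin n) (Fin n) ℂ) (s : ℝ) :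
    conjPicture H₀ 0 s = 0 := by
  simp [conjPicture]

lemma sum_ite_perm {Γ : ℕ} (σ : Equiv.Perm (Fin Γ)) (c : Fin Γ) (X : ℂ) :
    ∑ γ : Fin Γ, (if σ γ = c then X else 0) = X := by
  simp only [Equiv.apply_eq_iff_eq_symm_apply]
  rw [Finset.sum_ite_eq' Finset.univ (σ.symm c) (fun _ => X)]
  simp

lemma sum_Q {Γ : ℕ} (σ : Equiv.Perm (Fin Γ)) (c d : Fin Γ) (X Y : ℂ) :
    ∑ γ : Fin Γ, (∑ j ∈ Finset.Ioi γ, (if σ j = c then X else 0)) * (if σ γ = d then Y else 0)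
      = if σ.symm d < σ.symm c then X * Y else 0 := by
  simp only [Equiv.apply_eq_iff_eq_symm_apply]
  have h1 : ∀ γ : Fin Γ, (∑ j ∈ Finset.Ioi γ, (if j = σ.symm c then X else 0))
      = if σ.symm c ∈ Finset.Ioi γ then X else 0 :=
    fun γ => Finset.sum_ite_eq' _ _ _
  simp only [h1, Finset.mem_Ioi]
  have h2 : ∀ γ : Fin Γ, (if γ < σ.symm c then X else 0) * (if γ = σ.symm d then Y else 0)
      = if γ = σ.symm d then (if σ.symm d < σ.symm c then X*Y else 0) else 0 := by
    intro γ
    by_cases h : γ = σ.symm d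
    · rw [h]
      by_cases h' : σ.symm d < σ.symm c <;> simp [h']
    · simp [h]
  simp only [h2]
  rw [Finset.sum_ite_eq' Finset.univ (σ.symm d) _]
  simp

lemma S_value (Γ Υ : ℕ) (h1Γ : 1 < Γ) (π : ℕ → Equiv.Perm (Fin Γ))
    (b : ℕ → ℝ) (α p : ℝ) (hp : p ≠ 0) :
    ((List.ofFn fun v : Fin Υ =>
        ((List.ofFn fun γ : Fin Γ =>
          Texp (fun s => α • conjPicture ((p:ℂ) • P00) (Hmat Γ h1Γ (π ↑v γ)) s)
            (b ↑v) (b (↑v + 1))).reverse).prod)).reverse.prod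
    = U (∑ v : Fin Υ, xA α p (b ↑v) (b (↑v+1)),
        ∑ v : Fin Υ, (α:ℂ) * (((b (↑v+1) : ℝ):ℂ) - ((b ↑v : ℝ):ℂ)),
        (∑ v : Fin Υ, (if (π ↑v).symm (gam1 Γ h1Γ) < (π ↑v).symm (gam0 Γ h1Γ)
            then xA α p (b ↑v) (b (↑v+1)) * ((α:ℂ) * (((b (↑v+1):ℝ):ℂ) - ((b ↑v:ℝ):ℂ))) else 0))
          + ∑ v : Fin Υ, (∑ j ∈ Finset.Ioi v, xA α p (b ↑j) (b (↑j+1)))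
              * ((α:ℂ) * (((b (↑v+1):ℝ):ℂ) - ((b ↑v:ℝ):ℂ)))) := by
  have hfac : ∀ (v : Fin Υ) (γ : Fin Γ),
      Texp (fun s => α • conjPicture ((p:ℂ) • P00) (Hmat Γ h1Γ (π ↑v γ)) s)
        (b ↑v) (b (↑v + 1))
      = U (if π ↑v γ = gam0 Γ h1Γ then xA α p (b ↑v) (b (↑v+1)) else 0,
           if π ↑v γ = gam1 Γ h1Γ then (α:ℂ) * (((b (↑v+1):ℝ):ℂ) - ((b ↑v:ℝ):ℂ)) else 0, 0) := by
    intro v γ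
    by_cases h0 : π ↑v γ = gam0 Γ h1Γ
    · have hne : ¬ (π ↑v γ = gam1 Γ h1Γ) := by
        rw [h0]; exact gam_ne Γ h1Γ
      rw [if_pos h0, if_neg hne]
      have hfun : (fun s => α • conjPicture ((p:ℂ)•P00) (Hmat Γ h1Γ (π ↑v γ)) s)
          = fun s : ℝ => α • (Complex.exp ((p:ℂ)*(s:ℂ)) • E01) := by
        funext s
        simp only [Hmat, if_pos h0]
        rw [conj_E01]
      rw [hfun]
      exact TexpA α p _ _ hp
    · by_cases h1 : π ↑v γ = gam1 Γ h1Γ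
      · rw [if_neg h0, if_pos h1]
        have hfun : (fun s => α • conjPicture ((p:ℂ)•P00) (Hmat Γ h1Γ (π ↑v γ)) s)
            = fun _ : ℝ => α • (E12 : M3) := by
          funext s
          simp only [Hmat, if_neg h0, if_pos h1]
          rw [conj_E12]
        rw [hfun]
        exact TexpB α _ _
      · rw [if_neg h0, if_neg h1]
        have hfun : (fun s => α • conjPicture ((p:ℂ)•P00) (Hmat Γ h1Γ (π ↑v γ)) s)
            = fun _ : ℝ => (0 : M3) := by
          funext s
          simp only [Hmat, if_neg h0, if_neg h1]
          rw [conj_zero, smul_zero]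
        rw [hfun, TexpZero]
        exact U_one.symm
  have hinner : ∀ v : Fin Υ,
      ((List.ofFn fun γ : Fin Γ =>
        Texp (fun s => α • conjPicture ((p:ℂ) • P00) (Hmat Γ h1Γ (π ↑v γ)) s)
          (b ↑v) (b (↑v + 1))).reverse).prod
      = U (xA α p (b ↑v) (b (↑v+1)),
           (α:ℂ) * (((b (↑v+1):ℝ):ℂ) - ((b ↑v:ℝ):ℂ)),
           if (π ↑v).symm (gam1 Γ h1Γ) < (π ↑v).symm (gam0 Γ h1Γ)
             then xA α p (b ↑v) (b (↑v+1)) * ((α:ℂ) * (((b (↑v+1):ℝ):ℂ) - ((b ↑v:ℝ):ℂ)))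
             else 0) := by
    intro v
    have hlist : (List.ofFn fun γ : Fin Γ =>
          Texp (fun s => α • conjPicture ((p:ℂ) • P00) (Hmat Γ h1Γ (π ↑v γ)) s)
            (b ↑v) (b (↑v + 1)))
        = List.ofFn fun γ : Fin Γ =>
            U (if π ↑v γ = gam0 Γ h1Γ then xA α p (b ↑v) (b (↑v+1)) else 0,
               if π ↑v γ = gam1 Γ h1Γ then (α:ℂ) * (((b (↑v+1):ℝ):ℂ) - ((b ↑v:ℝ):ℂ)) else 0,
               0) :=
      congrArg List.ofFn (funext (hfac v))
    rw [hlist, prod_revOfFn]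
    refine congrArg U ?_
    refine Prod.ext ?_ (Prod.ext ?_ ?_)
    · exact sum_ite_perm (π ↑v) _ _
    · exact sum_ite_perm (π ↑v) _ _
    · show (∑ _γ : Fin Γ, (0:ℂ)) + _ = _
      rw [Finset.sum_const_zero, zero_add]
      exact sum_Q (π ↑v) _ _ _ _
  have hlist2 : (List.ofFn fun v : Fin Υ =>
        ((List.ofFn fun γ : Fin Γ =>
          Texp (fun s => α • conjPicture ((p:ℂ) • P00) (Hmat Γ h1Γ (π ↑v γ)) s)
            (b ↑v) (b (↑v + 1))).reverse).prod)
      = List.ofFn fun v : Fin Υ =>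
          U (xA α p (b ↑v) (b (↑v+1)),
             (α:ℂ) * (((b (↑v+1):ℝ):ℂ) - ((b ↑v:ℝ):ℂ)),
             if (π ↑v).symm (gam1 Γ h1Γ) < (π ↑v).symm (gam0 Γ h1Γ)
               then xA α p (b ↑v) (b (↑v+1)) * ((α:ℂ) * (((b (↑v+1):ℝ):ℂ) - ((b ↑v:ℝ):ℂ)))
               else 0) :=
    congrArg List.ofFn (funext hinner)
  rw [hlist2, prod_revOfFn]

lemma T_value (Γ : ℕ) (h1Γ : 1 < Γ) (α p t : ℝ) (hp : p ≠ 0) :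
    Texp (fun s => α • ∑ γ : Fin Γ, conjPicture ((p:ℂ)•P00) (Hmat Γ h1Γ γ) s) 0 t
      = U (xA α p 0 t, (α:ℂ)*(t:ℂ), zT α p t) := by
  have hfun : (fun s => α • ∑ γ : Fin Γ, conjPicture ((p:ℂ)•P00) (Hmat Γ h1Γ γ) s)
      = fun s : ℝ => α • (Complex.exp ((p:ℂ)*(s:ℂ)) • E01 + E12) := by
    funext s
    congr 1
    have hterm : ∀ γ : Fin Γ, conjPicture ((p:ℂ)•P00) (Hmat Γ h1Γ γ) s
        = (if γ = gam0 Γ h1Γ then Complex.exp ((p:ℂ)*(s:ℂ)) • E01 else 0)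
          + (if γ = gam1 Γ h1Γ then E12 else 0) := by
      intro γ
      by_cases h0 : γ = gam0 Γ h1Γ
      · have hne : ¬ (γ = gam1 Γ h1Γ) := by rw [h0]; exact gam_ne Γ h1Γ
        rw [if_pos h0, if_neg hne, add_zero]
        simp only [Hmat, if_pos h0]
        exact conj_E01 p s
      · by_cases h1 : γ = gam1 Γ h1Γ
        · rw [if_neg h0, if_pos h1, zero_add]
          simp only [Hmat, if_neg h0, if_pos h1]
          exact conj_E12 p s
        · rw [if_neg h0, if_neg h1, add_zero]
          simp only [Hmat, if_neg h0, if_neg h1]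
          exact conj_zero _ s
    rw [Finset.sum_congr rfl (fun γ _ => hterm γ), Finset.sum_add_distrib,
      Finset.sum_ite_eq' Finset.univ (gam0 Γ h1Γ) (fun _ => Complex.exp ((p:ℂ)*(s:ℂ)) • E01),
      Finset.sum_ite_eq' Finset.univ (gam1 Γ h1Γ) (fun _ => E12)]
    simp
  rw [hfun]
  exact TexpFull α p t hp

lemma U02 (q : ℂ × ℂ × ℂ) : (U q) 0 2 = q.2.2 := by
  simp [U, E01, E12, E02, Matrix.add_apply, Matrix.smul_apply, Matrix.one_apply,
    Matrix.single_apply_of_ne, Matrix.single_apply_same,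
    Fin.ext_iff]

lemma z_cast (Υ : ℕ) (b : ℕ → ℝ) (χb : ℕ → Prop) [DecidablePred χb] (α p t : ℝ) :
    ((∑ v : Fin Υ, (if χb ↑v then xA α p (b ↑v) (b (↑v+1))
          * ((α:ℂ) * (((b (↑v+1):ℝ):ℂ) - ((b ↑v:ℝ):ℂ))) else 0))
      + ∑ v : Fin Υ, (∑ j ∈ Finset.Ioi v, xA α p (b ↑j) (b (↑j+1)))
          * ((α:ℂ) * (((b (↑v+1):ℝ):ℂ) - ((b ↑v:ℝ):ℂ)))) - zT α p t
    = (α:ℂ)^2 * (((Xreal Υ b (fun m => if χb m then 1 else 0) p - Treal t p : ℝ)):ℂ) := by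
  have hxA : ∀ u w : ℝ, xA α p u w
      = (α:ℂ) * ((((Real.exp (w*p) - Real.exp (u*p))/p : ℝ)):ℂ) := by
    intro u w
    rw [xA]
    push_cast
    ring_nf
  have hz : zT α p t = (α:ℂ)^2 * ((Treal t p : ℝ) : ℂ) := by
    rw [zT, Treal]
    push_cast
    ring_nf
  have h1 : ∀ v : Fin Υ, (if χb ↑v then xA α p (b ↑v) (b (↑v+1))
        * ((α:ℂ) * (((b (↑v+1):ℝ):ℂ) - ((b ↑v:ℝ):ℂ))) else 0)
      = (α:ℂ)^2 * ((((if χb ↑v then (1:ℝ) else 0)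
          * (Ureal b p ↑v * (b (↑v+1) - b ↑v)) : ℝ)):ℂ) := by
    intro v
    by_cases h : χb ↑v
    · rw [if_pos h, if_pos h, hxA, Ureal]
      push_cast
      ring
    · rw [if_neg h, if_neg h]
      push_cast
      ring
  have h2 : ∀ v : Fin Υ, (∑ j ∈ Finset.Ioi v, xA α p (b ↑j) (b (↑j+1)))
        * ((α:ℂ) * (((b (↑v+1):ℝ):ℂ) - ((b ↑v:ℝ):ℂ)))
      = (α:ℂ)^2 * (((( ∑ j ∈ Finset.Ioi v, Ureal b p ↑j) * (b (↑v+1) - b ↑v) : ℝ)):ℂ) := by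
    intro v
    have hsum : ∑ j ∈ Finset.Ioi v, xA α p (b ↑j) (b (↑j+1))
        = (α:ℂ) * (((∑ j ∈ Finset.Ioi v, Ureal b p ↑j : ℝ)):ℂ) := by
      have hterm : ∀ j ∈ Finset.Ioi v, xA α p (b ↑j) (b (↑j+1))
          = (α:ℂ) * (((Ureal b p ↑j : ℝ)):ℂ) := by
        intro j _
        rw [hxA, Ureal]
      rw [Finset.sum_congr rfl hterm, ← Finset.mul_sum, Complex.ofReal_sum]
    rw [hsum]
    push_cast
    ring
  rw [Finset.sum_congr rfl (fun v _ => h1 v), Finset.sum_congr rfl (fun v _ => h2 v), hz,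
    ← Finset.mul_sum, ← Finset.mul_sum, Xreal]
  push_cast [Complex.ofReal_sum]
  ring

end NoGo

open NoGo in
/-- **No-go theorem, interaction-picture case**: for any fixed data `Γ ≥ 2`, `Υ ≥ 1`,
`a₀, …, a_Υ`, permutations `π₁, …, π_Υ`, `t ≠ 0`, and `k > 2`, there exist a dimension `n`
and matrices `H₀, H₁, …, H_Γ` such that, with `H_γ(s) = e^{H₀s} H_γ e^{-H₀s}`, the product
formula `S(t) = ∏_v ∏_γ Texp(∫_{a_{v-1}t}^{a_v t} α H_{π_v(γ)}(s) ds)` does NOT approximate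
`Texp(∫₀ᵗ α Σ_γ H_γ(s) ds)` with error `O(α^k)` as `α → 0`. -/
theorem no_better_than_alpha_squared_interaction_picture
    (Γ Υ : ℕ) (hΓ : 2 ≤ Γ) (hΥ : 1 ≤ Υ)
    (a : ℕ → ℝ) (π : ℕ → Equiv.Perm (Fin Γ))
    (t : ℝ) (ht : t ≠ 0) (k : ℝ) (hk : 2 < k) :
    ∃ (n : ℕ) (H₀ : Matrix (Fin n) (Fin n) ℂ) (H : Fin Γ → Matrix (Fin n) (Fin n) ℂ),
      ¬ (fun α : ℝ =>
            ‖((List.ofFn fun v : Fin Υ =>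
                ((List.ofFn fun γ : Fin Γ =>
                  Texp (fun s => α • conjPicture H₀ (H (π v γ)) s)
                    (a v * t) (a (v + 1) * t)).reverse).prod)).reverse.prod -
              Texp (fun s => α • ∑ γ, conjPicture H₀ (H γ) s) 0 t‖)
          =O[nhds 0] (fun α : ℝ => |α| ^ k) := by
  have h1Γ : 1 < Γ := hΓ
  obtain ⟨p, hp1, hXT⟩ := exists_good_p Υ (fun m => a m * t)
    (fun m => if (π m).symm (gam1 Γ h1Γ) < (π m).symm (gam0 Γ h1Γ) then 1 else 0) t ht
  have hppos : (0:ℝ) < p := lt_of_lt_of_le one_pos hp1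
  have hp0 : p ≠ 0 := hppos.ne'
  refine ⟨3, (p:ℂ) • P00, Hmat Γ h1Γ, ?_⟩
  intro hO
  set δ : ℝ := |Xreal Υ (fun m => a m * t)
    (fun m => if (π m).symm (gam1 Γ h1Γ) < (π m).symm (gam0 Γ h1Γ) then 1 else 0) p
      - Treal t p| with hδdef
  have hδ : 0 < δ := abs_pos.mpr (sub_ne_zero.mpr hXT)
  have hlow : ∀ α : ℝ,
      δ * |α|^(2:ℕ) ≤ ‖((List.ofFn fun v : Fin Υ =>
          ((List.ofFn fun γ : Fin Γ =>
            Texp (fun s => α • conjPicture ((p:ℂ) • P00) (Hmat Γ h1Γ (π v γ)) s)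
              (a v * t) (a (v + 1) * t)).reverse).prod)).reverse.prod -
        Texp (fun s => α • ∑ γ, conjPicture ((p:ℂ) • P00) (Hmat Γ h1Γ γ) s) 0 t‖ := by
    intro α
    rw [S_value Γ Υ h1Γ π (fun m => a m * t) α p hp0, T_value Γ h1Γ α p t hp0]
    have hentry : (U (∑ v : Fin Υ, xA α p (a ↑v * t) (a (↑v+1) * t),
        ∑ v : Fin Υ, (α:ℂ) * (((a (↑v+1) * t : ℝ):ℂ) - ((a ↑v * t : ℝ):ℂ)),
        (∑ v : Fin Υ, (if (π ↑v).symm (gam1 Γ h1Γ) < (π ↑v).symm (gam0 Γ h1Γ)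
            then xA α p (a ↑v * t) (a (↑v+1) * t)
              * ((α:ℂ) * (((a (↑v+1) * t:ℝ):ℂ) - ((a ↑v * t:ℝ):ℂ))) else 0))
          + ∑ v : Fin Υ, (∑ j ∈ Finset.Ioi v, xA α p (a ↑j * t) (a (↑j+1) * t))
              * ((α:ℂ) * (((a (↑v+1) * t:ℝ):ℂ) - ((a ↑v * t:ℝ):ℂ))))
        - U (xA α p 0 t, (α:ℂ)*(t:ℂ), zT α p t)) 0 2
        = (α:ℂ)^2 * (((Xreal Υ (fun m => a m * t)
            (fun m => if (π m).symm (gam1 Γ h1Γ) < (π m).symm (gam0 Γ h1Γ) then 1 else 0) p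
            - Treal t p : ℝ)):ℂ) := by
      rw [Matrix.sub_apply, U02, U02]
      exact z_cast Υ (fun m => a m * t)
        (fun m => (π m).symm (gam1 Γ h1Γ) < (π m).symm (gam0 Γ h1Γ)) α p t
    calc δ * |α|^(2:ℕ)
        = ‖(α:ℂ)^2 * (((Xreal Υ (fun m => a m * t)
            (fun m => if (π m).symm (gam1 Γ h1Γ) < (π m).symm (gam0 Γ h1Γ) then 1 else 0) p
            - Treal t p : ℝ)):ℂ)‖ := by
          rw [norm_mul, norm_pow, Complex.norm_real, Complex.norm_real, Real.norm_eq_abs, Real.norm_eq_abs, hδdef]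
          ring
      _ ≤ _ := by
          rw [← hentry]
          exact entry_le_norm _ 0 2
  obtain ⟨C, hC⟩ := Asymptotics.isBigO_iff.mp hO
  have hev : ∀ᶠ α : ℝ in nhdsWithin 0 (Set.Ioi 0), δ ≤ C * α ^ (k - 2) := by
    have hC' := hC.filter_mono (nhdsWithin_le_nhds (s := Set.Ioi (0:ℝ)))
    filter_upwards [hC', self_mem_nhdsWithin] with α hα hα0
    simp only [Set.mem_Ioi] at hα0
    have h1 : δ * |α|^(2:ℕ) ≤ C * |α| ^ k := by
      rw [Real.norm_eq_abs, abs_norm, Real.norm_eq_abs,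
        abs_of_nonneg (Real.rpow_nonneg (abs_nonneg α) k)] at hα
      exact le_trans (hlow α) hα
    rw [abs_of_pos hα0] at h1
    have hα2 : (0:ℝ) < α^(2:ℕ) := by positivity
    have hsplit : α ^ k = α ^ (k-2) * α^(2:ℕ) := by
      rw [← Real.rpow_natCast α 2, ← Real.rpow_add hα0]
      norm_num
    rw [hsplit, ← mul_assoc] at h1
    exact le_of_mul_le_mul_right h1 hα2
  have hlim : Filter.Tendsto (fun α : ℝ => C * α ^ (k-2)) (nhdsWithin 0 (Set.Ioi 0)) (nhds 0) := by
    have hcont : ContinuousAt (fun α : ℝ => α ^ (k-2)) 0 :=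
      Real.continuousAt_rpow_const 0 (k-2) (Or.inr (by linarith))
    have h0 : (0:ℝ) ^ (k-2) = 0 := Real.zero_rpow (by intro h; rw [sub_eq_zero] at h; linarith)
    have htd := (hcont.tendsto.mono_left
      (nhdsWithin_le_nhds (s := Set.Ioi (0:ℝ)))).const_mul C
    simp only [h0, mul_zero] at htd
    exact htd
  have hfin : δ ≤ 0 := ge_of_tendsto hlim hev
  linarith
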